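/- Let n ≥ 1 and suppose M_k is invertible for every k ∈ ℤ. Set c_k^T := e_n^T M_k^{-1}, let Θ_k be the (invertible) matrix whose i-th row is c_{k+i}^T A_{k+i-1} ⋯ A_k, and let y_k := c_k^T x_k. Then for every solution (x, u) of the system, the state is parameterized by the flat output and its forward shifts: x_k = Θ_k^{-1} (y_k, y_{k+1}, …, y_{k+n-1})^T for every k ∈ ℤ. -/
import Mathlib


open Matrix BigOperators

noncomputable section

/-- `Pmat n A k j = A (k-1) * A (k-2) * ⋯ * A (k-j)` (product of `j` factors, `Pmat n A k 0 = 1`). -/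
def Pmat (n : ℕ) (A : ℤ → Matrix (Fin n) (Fin n) ℝ) (k : ℤ) : ℕ → Matrix (Fin n) (Fin n) ℝ
  | 0 => 1
  | j + 1 => Pmat n A k j * A (k - ((j : ℤ) + 1))

/-- The matrix `M_k` whose `j`-th column is `P_k^{(j)} b_{k-1-j}`. -/
def Mmat (n : ℕ) (A : ℤ → Matrix (Fin n) (Fin n) ℝ) (b : ℤ → Fin n → ℝ) (k : ℤ) :
    Matrix (Fin n) (Fin n) ℝ :=
  Matrix.of fun i j => (Pmat n A k (j : ℕ) *ᵥ b (k - 1 - ((j : ℕ) : ℤ))) i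

/-- The last standard basis vector `e_n` of `ℝ^n`. -/
def elast (n : ℕ) : Fin n → ℝ := fun i => if (i : ℕ) = n - 1 then 1 else 0

/-- The row vector `c_k^T := e_n^T M_k^{-1}`. -/
def cvec (n : ℕ) (A : ℤ → Matrix (Fin n) (Fin n) ℝ) (b : ℤ → Fin n → ℝ) (k : ℤ) :
    Fin n → ℝ :=
  elast n ᵥ* (Mmat n A b k)⁻¹

/-- The matrix `Θ_k` whose `i`-th row is `c_{k+i}^T A_{k+i-1} ⋯ A_k`. -/
def Theta (n : ℕ) (A : ℤ → Matrix (Fin n) (Fin n) ℝ) (b : ℤ → Fin n → ℝ) (k : ℤ) :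
    Matrix (Fin n) (Fin n) ℝ :=
  Matrix.of fun i j => (cvec n A b (k + (i : ℕ)) ᵥ* Pmat n A (k + (i : ℕ)) (i : ℕ)) j

/-- The transformed dynamics matrix `Ā_k := Θ_{k+1} A_k Θ_k^{-1}`. -/
def Abar (n : ℕ) (A : ℤ → Matrix (Fin n) (Fin n) ℝ) (b : ℤ → Fin n → ℝ) (k : ℤ) :
    Matrix (Fin n) (Fin n) ℝ :=
  Theta n A b (k + 1) * A k * (Theta n A b k)⁻¹

variable (n : ℕ) (A : ℤ → Matrix (Fin n) (Fin n) ℝ) (b : ℤ → Fin n → ℝ)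

lemma Pmat_succ_left (m : ℤ) (j : ℕ) :
    Pmat n A m (j + 1) = A (m - 1) * Pmat n A (m - 1) j := by
  induction j with
  | zero => simp [Pmat]
  | succ j ih =>
    show Pmat n A m (j + 1) * A (m - ((j:ℤ) + 1 + 1)) = _
    rw [ih]
    show _ = A (m-1) * (Pmat n A (m-1) j * A (m - 1 - ((j:ℤ) + 1)))
    rw [Matrix.mul_assoc]
    congr 2
    ring

lemma Pmat_mul (m : ℤ) (i j : ℕ) :
    Pmat n A m i * Pmat n A (m - i) j = Pmat n A m (i + j) := by
  induction j with
  | zero => simp [Pmat]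
  | succ j ih =>
    show Pmat n A m i * (Pmat n A (m - i) j * A (m - i - ((j:ℤ) + 1))) = Pmat n A m ((i+j) + 1)
    show _ = Pmat n A m (i + j) * A (m - (((i+j : ℕ):ℤ) + 1))
    rw [← Matrix.mul_assoc, ih]
    congr 2
    push_cast
    ring

lemma cprop (hM : ∀ k : ℤ, IsUnit (Mmat n A b k)) (m : ℤ) (l : ℕ) (hl : l < n) :
    cvec n A b m ⬝ᵥ (Pmat n A m l *ᵥ b (m - 1 - l)) = if l = n - 1 then 1 else 0 := by
  have h1 : cvec n A b m ᵥ* Mmat n A b m = elast n := by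
    unfold cvec
    rw [Matrix.vecMul_vecMul,
      Matrix.nonsing_inv_mul _ ((Matrix.isUnit_iff_isUnit_det _).mp (hM m)),
      Matrix.vecMul_one]
  have h2 := congrFun h1 ⟨l, hl⟩
  simpa [Matrix.vecMul, dotProduct, Mmat, elast] using h2

lemma sol_formula (x : ℤ → Fin n → ℝ) (u : ℤ → ℝ)
    (hsol : ∀ k : ℤ, x (k + 1) = A k *ᵥ x k + u k • b k) (k : ℤ) (j : ℕ) :
    x (k + j) = Pmat n A (k + j) j *ᵥ x k +
      ∑ l ∈ Finset.range j, u (k + j - 1 - l) • (Pmat n A (k + j) l *ᵥ b (k + j - 1 - l)) := by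
  induction j with
  | zero => simp [Pmat, Matrix.one_mulVec]
  | succ j ih =>
    have hc : (k + ((j:ℕ) + 1 : ℕ) : ℤ) = (k + j) + 1 := by push_cast; ring
    rw [hc, hsol (k + j), ih, Finset.sum_range_succ']
    have hP : ∀ l : ℕ, A (k + j) * Pmat n A (k + j) l = Pmat n A (k + j + 1) (l + 1) := by
      intro l
      rw [Pmat_succ_left n A (k + j + 1) l]
      congr 1 <;> ring_nf
    rw [Matrix.mulVec_add, Matrix.mulVec_mulVec, hP j]
    have hsum : A (k + j) *ᵥ (∑ l ∈ Finset.range j,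
        u (k + j - 1 - l) • (Pmat n A (k + j) l *ᵥ b (k + j - 1 - l))) =
        ∑ l ∈ Finset.range j,
          u (k + (j:ℤ) + 1 - 1 - ((l+1:ℕ):ℤ)) •
            (Pmat n A (k + (j:ℤ) + 1) (l+1) *ᵥ b (k + (j:ℤ) + 1 - 1 - ((l+1:ℕ):ℤ))) := by
      have := map_sum (Matrix.mulVecLin (A (k + (j:ℤ))))
        (fun l : ℕ => u (k + (j:ℤ) - 1 - (l:ℤ)) • (Pmat n A (k + (j:ℤ)) l *ᵥ b (k + (j:ℤ) - 1 - (l:ℤ))))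
        (Finset.range j)
      simp only [Matrix.mulVecLin_apply] at this
      rw [this]
      refine Finset.sum_congr rfl fun l _ => ?_
      rw [Matrix.mulVec_smul, Matrix.mulVec_mulVec, hP l]
      have e1 : (k + (j:ℤ) + 1 - 1 - ((l+1:ℕ):ℤ) : ℤ) = k + j - 1 - l := by push_cast; ring
      rw [e1]
    rw [hsum]
    have hT0 : u (k + (j:ℤ) + 1 - 1 - ((0:ℕ):ℤ)) •
        (Pmat n A (k + (j:ℤ) + 1) 0 *ᵥ b (k + (j:ℤ) + 1 - 1 - ((0:ℕ):ℤ))) = u (k + j) • b (k + j) := by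
      norm_num [Pmat, Matrix.one_mulVec]
    rw [hT0]
    abel


lemma theta_mulVec (hM : ∀ k : ℤ, IsUnit (Mmat n A b k)) (x : ℤ → Fin n → ℝ) (u : ℤ → ℝ)
    (hsol : ∀ k : ℤ, x (k + 1) = A k *ᵥ x k + u k • b k) (k : ℤ) :
    Theta n A b k *ᵥ x k = fun i : Fin n => cvec n A b (k + (i : ℕ)) ⬝ᵥ x (k + (i : ℕ)) := by
  funext i
  have hrow : (Theta n A b k *ᵥ x k) i =
      cvec n A b (k + (i:ℕ)) ⬝ᵥ (Pmat n A (k + (i:ℕ)) (i:ℕ) *ᵥ x k) := by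
    rw [Matrix.dotProduct_mulVec]
    rfl
  have hx := sol_formula n A b x u hsol k (i:ℕ)
  have hxP : Pmat n A (k + (i:ℕ)) (i:ℕ) *ᵥ x k = x (k + (i:ℕ)) -
      ∑ l ∈ Finset.range (i:ℕ), u (k + (i:ℕ) - 1 - l) •
        (Pmat n A (k + (i:ℕ)) l *ᵥ b (k + (i:ℕ) - 1 - l)) :=
    eq_sub_of_add_eq hx.symm
  have dps : ∀ (s : Finset ℕ) (f : ℕ → Fin n → ℝ) (v : Fin n → ℝ),
      v ⬝ᵥ (∑ l ∈ s, f l) = ∑ l ∈ s, v ⬝ᵥ f l := by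
    intro s f v
    simp only [dotProduct, Finset.sum_apply, Finset.mul_sum]
    exact Finset.sum_comm
  rw [hrow, hxP, dotProduct_sub, dps]
  have hz : ∀ l ∈ Finset.range (i:ℕ),
      cvec n A b (k + (i:ℕ)) ⬝ᵥ (u (k + (i:ℕ) - 1 - l) •
        (Pmat n A (k + (i:ℕ)) l *ᵥ b (k + (i:ℕ) - 1 - l))) = 0 := by
    intro l hl
    rw [Finset.mem_range] at hl
    rw [dotProduct_smul]
    have hln : l < n := lt_trans hl i.isLt
    have harg : (k + ((i:ℕ):ℤ) - 1 - (l:ℤ)) = (k + (i:ℕ)) - 1 - (l:ℤ) := by ring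
    rw [harg, cprop n A b hM (k + (i:ℕ)) l hln]
    have : l ≠ n - 1 := by omega
    simp [this]
  rw [Finset.sum_eq_zero hz, sub_zero]


lemma thetaM_entry (hM : ∀ k : ℤ, IsUnit (Mmat n A b k)) (k : ℤ) (i j : Fin n)
    (hij : (i:ℕ) + (j:ℕ) < n) :
    (Theta n A b k * Mmat n A b k) i j = if (i:ℕ) + (j:ℕ) = n - 1 then 1 else 0 := by
  have h1 : (Theta n A b k * Mmat n A b k) i j =
      (cvec n A b (k + (i:ℕ)) ᵥ* Pmat n A (k + (i:ℕ)) (i:ℕ)) ⬝ᵥ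
        (Pmat n A k (j:ℕ) *ᵥ b (k - 1 - ((j:ℕ):ℤ))) := by
    rw [Matrix.mul_apply]
    rfl
  rw [h1, ← Matrix.dotProduct_mulVec, Matrix.mulVec_mulVec]
  have h2 : Pmat n A (k + (i:ℕ)) (i:ℕ) * Pmat n A k (j:ℕ) =
      Pmat n A (k + (i:ℕ)) ((i:ℕ) + (j:ℕ)) := by
    have := Pmat_mul n A (k + (i:ℕ)) (i:ℕ) (j:ℕ)
    rwa [show (k + ((i:ℕ):ℤ) - ((i:ℕ):ℤ)) = k by ring] at this
  rw [h2]
  have h3 : (k - 1 - ((j:ℕ):ℤ)) = (k + (i:ℕ)) - 1 - (((i:ℕ) + (j:ℕ) : ℕ):ℤ) := by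
    push_cast; ring
  rw [h3, cprop n A b hM (k + (i:ℕ)) ((i:ℕ) + (j:ℕ)) hij]

lemma theta_isUnit (hn : 1 ≤ n) (hM : ∀ k : ℤ, IsUnit (Mmat n A b k)) (k : ℤ) :
    IsUnit (Theta n A b k).det := by
  set TM := Theta n A b k * Mmat n A b k with hTM
  set N := TM.submatrix id Fin.revPerm with hN
  have hNentry : ∀ i j : Fin n, N i j = TM i (Fin.rev j) := fun i j => rfl
  have hlow : N.BlockTriangular OrderDual.toDual := by
    intro i j hij
    have hij' : (i:ℕ) < (j:ℕ) := hij
    rw [hNentry, hTM]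
    have hrev : ((Fin.rev j : Fin n) : ℕ) = n - 1 - (j:ℕ) := by rw [Fin.val_rev]; omega
    rw [thetaM_entry n A b hM k i (Fin.rev j) (by rw [hrev]; omega)]
    rw [hrev]
    have : ¬ ((i:ℕ) + (n - 1 - (j:ℕ)) = n - 1) := by omega
    simp [this]
  have hdiag : ∀ i : Fin n, N i i = 1 := by
    intro i
    rw [hNentry, hTM]
    have hrev : ((Fin.rev i : Fin n) : ℕ) = n - 1 - (i:ℕ) := by rw [Fin.val_rev]; omega
    rw [thetaM_entry n A b hM k i (Fin.rev i) (by rw [hrev]; omega), hrev]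
    have : (i:ℕ) + (n - 1 - (i:ℕ)) = n - 1 := by omega
    simp [this]
  have hdetN : N.det = 1 := by
    rw [Matrix.det_of_lowerTriangular N hlow]
    simp [hdiag]
  have hperm : N.det = (Equiv.Perm.sign (Fin.revPerm : Equiv.Perm (Fin n)) : ℝ) * TM.det := by
    rw [hN, Matrix.det_permute']
  have hdTM : IsUnit TM.det := by
    rw [isUnit_iff_ne_zero]
    intro h0
    rw [h0, mul_zero, hdetN] at hperm
    exact one_ne_zero hperm
  have hdM : IsUnit (Mmat n A b k).det := (Matrix.isUnit_iff_isUnit_det _).mp (hM k)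
  have hTheta : Theta n A b k = TM * (Mmat n A b k)⁻¹ := by
    rw [hTM, Matrix.mul_nonsing_inv_cancel_right _ _ hdM]
  rw [hTheta, Matrix.det_mul]
  exact hdTM.mul (Matrix.isUnit_nonsing_inv_det _ hdM)


/-- for every solution `(x, u)`, the state is parameterized by the flat
output `y_k := c_k^T x_k` and its forward shifts:
`x_k = Θ_k⁻¹ (y_k, y_{k+1}, …, y_{k+n-1})^T` for every `k`. -/
theorem stmt6 (n : ℕ) (hn : 1 ≤ n)
    (A : ℤ → Matrix (Fin n) (Fin n) ℝ) (b : ℤ → Fin n → ℝ)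
    (hM : ∀ k : ℤ, IsUnit (Mmat n A b k))
    (x : ℤ → Fin n → ℝ) (u : ℤ → ℝ)
    (hsol : ∀ k : ℤ, x (k + 1) = A k *ᵥ x k + u k • b k) :
    ∀ k : ℤ,
      x k = (Theta n A b k)⁻¹ *ᵥ
        fun i : Fin n => cvec n A b (k + (i : ℕ)) ⬝ᵥ x (k + (i : ℕ)) := by
  intro k
  rw [← theta_mulVec n A b hM x u hsol k, Matrix.mulVec_mulVec,
    Matrix.nonsing_inv_mul _ (theta_isUnit n A b hn hM k), Matrix.one_mulVec]
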